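/- arXiv:2604.05167 — 2 statements merged into one kernel-verified Lean document; each statement's English description precedes it below -/
import Mathlib

section
/- Let S₁, …, S_n, S_{new} be exchangeable real-valued random variables that are almost surely distinct, let τ ∈ (0,1), and let k = ⌈(n+1)τ⌉ with k ≤ n. If ρ̂ = S_{(k)} is the k-th order statistic of S₁,…,S_n, then P(S_{new} ≤ ρ̂) ≥ k/(n+1) ≥ τ. -/
/-! The rank of `S_new` among all `n + 1` scores is, by exchangeability and almost sure
distinctness, uniform on `{0, …, n}`, hence below `k` with probability `k / (n + 1)`; and when
fewer than `k` calibration scores lie below `S_new`, it is at most their `k`-th order statistic. -/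

open MeasureTheory

/-- The `k`-th order statistic (1-indexed) of `x : Fin n → ℝ`. -/
noncomputable def orderStat {n : ℕ} (k : ℕ) (x : Fin n → ℝ) : ℝ := by
  classical
  exact ((Multiset.map x (Finset.univ : Finset (Fin n)).val).sort (· ≤ ·)).getD (k - 1) 0

open Finset Function
open scoped ENNReal

theorem List.Pairwise.succ_le_countP_lt {α : Type*} [LinearOrder α] {l : List α}
    (hl : l.Pairwise (· ≤ ·)) {i : ℕ} (hi : i < l.length) {t : α} (ht : l[i] < t) :
    i + 1 ≤ l.countP (· < t) := by
  have hprefix : (l.take (i + 1)).countP (· < t) = i + 1 := by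
    rw [List.countP_eq_length.mpr, List.length_take_of_le hi]
    intro a ha
    obtain ⟨m, hm, rfl⟩ := List.getElem_of_mem ha
    have hmi : m ≤ i := by simp only [List.length_take, lt_inf_iff] at hm; omega
    rw [List.getElem_take, decide_eq_true_eq]
    exact (hl.rel_get_of_le (a := ⟨m, by omega⟩) (b := ⟨i, hi⟩) hmi).trans_lt ht
  exact hprefix ▸ (List.take_sublist _ l).countP_le

theorem Multiset.le_sort_getD {α : Type*} [LinearOrder α] {s : Multiset α} {k : ℕ}
    (hk : k ≤ card s) {t : α} (h : s.countP (· < t) < k) (d : α) :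
    t ≤ (s.sort (· ≤ ·)).getD (k - 1) d := by
  have hlen := s.length_sort (· ≤ ·)
  rw [List.getD_eq_getElem _ _ (by omega)]
  by_contra! hlt
  have := (s.pairwise_sort _).succ_le_countP_lt _ hlt
  rw [← Multiset.coe_countP, Multiset.sort_eq] at this
  omega

theorem le_orderStat {n k : ℕ} (hkn : k ≤ n) (x : Fin n → ℝ) {t : ℝ}
    (h : #{i | x i < t} < k) : t ≤ orderStat k x :=
  Multiset.le_sort_getD (by simpa using hkn)
    (by rwa [Multiset.countP_map, ← filter_val, ← card_def]) 0

def rank {ι α : Type*} [Fintype ι] [LinearOrder α] (y : ι → α) (j : ι) : ℕ :=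
  #{m | y m < y j}

section Rank

variable {ι α : Type*} [Fintype ι] [LinearOrder α]

theorem rank_comp_perm (y : ι → α) (σ : Equiv.Perm ι) (j : ι) :
    rank (y ∘ σ) j = rank y (σ j) :=
  card_equiv σ (by simp)

theorem rank_lt_rank {y : ι → α} {a b : ι} (h : y a < y b) : rank y a < rank y b :=
  card_lt_card <| (ssubset_iff_of_subset fun m hm => by
    simp only [mem_filter, mem_univ, true_and] at hm ⊢; exact hm.trans h).mpr
    ⟨a, by simp [h], by simp⟩

theorem rank_lt_card (y : ι → α) (j : ι) : rank y j < Fintype.card ι :=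
  card_lt_univ_of_notMem (x := j) (by simp)

theorem rank_injective {y : ι → α} (hy : Injective y) : Injective (rank y) := by
  intro a b hab
  by_contra hne
  rcases (hy.ne hne).lt_or_gt with h | h
  · exact (rank_lt_rank h).ne hab
  · exact (rank_lt_rank h).ne' hab

theorem exists_rank_eq {y : ι → α} (hy : Injective y) {r : ℕ} (hr : r < Fintype.card ι) :
    ∃ j, rank y j = r := by
  let f : ι → Fin (Fintype.card ι) := fun j => ⟨rank y j, rank_lt_card y j⟩
  have hf : Bijective f := (Fintype.bijective_iff_injective_and_card f).mpr
    ⟨fun a b h => rank_injective hy (Fin.val_eq_of_eq h), by simp⟩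
  obtain ⟨j, hj⟩ := hf.surjective ⟨r, hr⟩
  exact ⟨j, congrArg Fin.val hj⟩

theorem rank_last {n : ℕ} (y : Fin (n + 1) → α) :
    rank y (Fin.last n) = #{i : Fin n | y i.castSucc < y (Fin.last n)} := by
  rw [rank, Fin.univ_castSuccEmb, filter_cons, if_neg (lt_irrefl _), filter_map, card_map]
  rfl

end Rank

def Exchangeable {Ω ι α : Type*} [MeasurableSpace Ω] [MeasurableSpace α] (P : Measure Ω)
    (X : Ω → ι → α) : Prop :=
  ∀ σ : Equiv.Perm ι, P.map (fun ω i => X ω (σ i)) = P.map X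

section Measure

variable {Ω ι α : Type*} [MeasurableSpace Ω] [Fintype ι] [LinearOrder α] [MeasurableSpace α]
  [TopologicalSpace α] [OrderClosedTopology α] [SecondCountableTopology α]
  [OpensMeasurableSpace α] {P : Measure Ω} {X : Ω → ι → α}

theorem measurable_rank (j : ι) : Measurable fun y : ι → α => rank y j := by
  simp only [rank, card_filter]
  exact Finset.measurable_sum _ fun m _ => Measurable.ite
    (measurableSet_lt (measurable_pi_apply m) (measurable_pi_apply j)) measurable_const
    measurable_const

theorem measurableSet_rank_eq (hX : Measurable X) (j : ι) (r : ℕ) :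
    MeasurableSet {ω | rank (X ω) j = r} :=
  (measurable_rank j).comp hX (measurableSet_singleton r)

theorem Exchangeable.measure_rank_eq [DecidableEq ι] (hP : Exchangeable P X) (hX : Measurable X)
    (i j : ι) (r : ℕ) : P {ω | rank (X ω) i = r} = P {ω | rank (X ω) j = r} := by
  let Y := fun ω i' => X ω (Equiv.swap i j i')
  have hY : Measurable Y := measurable_pi_lambda _ fun _ => (measurable_pi_apply _).comp hX
  have hs : MeasurableSet {y : ι → α | rank y j = r} :=
    measurable_rank j (measurableSet_singleton r)
  have hpre : {ω | rank (X ω) i = r} = Y ⁻¹' {y | rank y j = r} := by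
    ext ω
    change _ = r ↔ rank (X ω ∘ Equiv.swap i j) j = r
    rw [rank_comp_perm, Equiv.swap_apply_right]
  rw [hpre, ← Measure.map_apply hY hs, hP, Measure.map_apply hX hs]
  rfl

theorem Exchangeable.measure_rank_eq_inv_card [IsProbabilityMeasure P] (hP : Exchangeable P X)
    (hX : Measurable X) (hinj : ∀ᵐ ω ∂P, Injective (X ω)) (j : ι) {r : ℕ}
    (hr : r < Fintype.card ι) :
    P {ω | rank (X ω) j = r} = (Fintype.card ι : ℝ≥0∞)⁻¹ := by
  classical
  -- Almost surely exactly one coordinate has rank `r`, and all are equally likely to.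
  have hnull : P {ω | ¬Injective (X ω)} = 0 := ae_iff.mp hinj
  have hdisj : (Set.univ : Set ι).Pairwise (AEDisjoint P on fun i => {ω | rank (X ω) i = r}) :=
    fun a _ b _ hab => measure_mono_null (t := {ω | ¬Injective (X ω)})
      (fun ω ⟨ha, hb⟩ hω => hab (rank_injective hω (ha.trans hb.symm))) hnull
  have hcover : P (⋃ i ∈ univ, {ω | rank (X ω) i = r}) = 1 := by
    rw [← measure_univ (μ := P)]
    refine measure_congr (ae_eq_univ.mpr (measure_mono_null (t := {ω | ¬Injective (X ω)})
      (fun ω hω hinjω => ?_) hnull))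
    obtain ⟨i, hi⟩ := exists_rank_eq hinjω hr
    exact hω (Set.mem_biUnion (mem_univ i) hi)
  rw [measure_biUnion_finset₀ (by simpa using hdisj)
    (fun i _ => (measurableSet_rank_eq hX i r).nullMeasurableSet)] at hcover
  simp only [hP.measure_rank_eq hX _ j r, sum_const, card_univ, nsmul_eq_mul] at hcover
  exact ENNReal.eq_inv_of_mul_eq_one_left (by rwa [mul_comm])

theorem Exchangeable.measure_rank_lt [IsProbabilityMeasure P] (hP : Exchangeable P X)
    (hX : Measurable X) (hinj : ∀ᵐ ω ∂P, Injective (X ω)) (j : ι) {k : ℕ}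
    (hk : k ≤ Fintype.card ι) :
    P {ω | rank (X ω) j < k} = k * (Fintype.card ι : ℝ≥0∞)⁻¹ := by
  have hunion : {ω | rank (X ω) j < k} = ⋃ r ∈ range k, {ω | rank (X ω) j = r} := by
    ext ω; simp
  rw [hunion, measure_biUnion_finset (fun a _ b _ hab => Set.disjoint_left.mpr
      fun ω ha hb => hab (ha.symm.trans hb)) (fun r _ => measurableSet_rank_eq hX j r),
    sum_congr rfl fun r hr => hP.measure_rank_eq_inv_card hX hinj j
      ((mem_range.mp hr).trans_le hk), sum_const, card_range, nsmul_eq_mul]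

end Measure

theorem split_conformal_coverage_general {Ω : Type*} [MeasurableSpace Ω]
    (P : Measure Ω) [IsProbabilityMeasure P]
    (n : ℕ) (S : Fin (n + 1) → Ω → ℝ) (hmeas : ∀ i, Measurable (S i))
    (hexch : ∀ π : Equiv.Perm (Fin (n + 1)),
      Measure.map (fun ω => fun i => S (π i) ω) P =
        Measure.map (fun ω => fun i => S i ω) P)
    (hdist : ∀ᵐ ω ∂P, ∀ i j : Fin (n + 1), i ≠ j → S i ω ≠ S j ω)
    (τ : ℝ)
    (k : ℕ) (hk : k = ⌈((n : ℝ) + 1) * τ⌉₊) (hkn : k ≤ n) :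
    τ ≤ (k : ℝ) / ((n : ℝ) + 1) ∧
    (k : ℝ) / ((n : ℝ) + 1) ≤
      (P {ω | S (Fin.last n) ω ≤
        orderStat k (fun i : Fin n => S i.castSucc ω)}).toReal := by
  refine ⟨?_, ?_⟩
  · rw [le_div_iff₀ (by positivity), hk, mul_comm]
    exact Nat.le_ceil _
  let X : Ω → Fin (n + 1) → ℝ := fun ω i => S i ω
  have hX : Measurable X := measurable_pi_lambda _ hmeas
  have hP : Exchangeable P X := hexch
  have hinj : ∀ᵐ ω ∂P, Injective (X ω) :=
    hdist.mono fun ω h i j hij => by_contra fun hne => h i j hne hij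
  have hcov : {ω | rank (X ω) (Fin.last n) < k} ⊆
      {ω | S (Fin.last n) ω ≤ orderStat k (fun i : Fin n => S i.castSucc ω)} :=
    fun ω hω => le_orderStat hkn _ (rank_last (X ω) ▸ hω)
  calc (k : ℝ) / ((n : ℝ) + 1) = (P {ω | rank (X ω) (Fin.last n) < k}).toReal := by
        rw [hP.measure_rank_lt hX hinj _ (by simpa using hkn.trans n.le_succ)]
        simp [div_eq_mul_inv, ENNReal.toReal_add]
    _ ≤ _ := ENNReal.toReal_mono (measure_ne_top P _) (measure_mono hcov)

/-- Split conformal coverage: for exchangeable a.s. distinct scores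
`S₁,…,Sₙ,S_new`, `τ ∈ (0,1)`, and `k = ⌈(n+1)τ⌉ ≤ n`, with `ρ̂` the `k`-th
order statistic of the first `n` scores, `P(S_new ≤ ρ̂) ≥ k/(n+1) ≥ τ`. -/
theorem split_conformal_coverage {Ω : Type*} [MeasurableSpace Ω]
    (P : Measure Ω) [IsProbabilityMeasure P]
    (n : ℕ) (S : Fin (n + 1) → Ω → ℝ) (hmeas : ∀ i, Measurable (S i))
    (hexch : ∀ π : Equiv.Perm (Fin (n + 1)),
      Measure.map (fun ω => fun i => S (π i) ω) P =
        Measure.map (fun ω => fun i => S i ω) P)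
    (hdist : ∀ᵐ ω ∂P, ∀ i j : Fin (n + 1), i ≠ j → S i ω ≠ S j ω)
    (τ : ℝ) (hτ : τ ∈ Set.Ioo (0 : ℝ) 1)
    (k : ℕ) (hk : k = ⌈((n : ℝ) + 1) * τ⌉₊) (hkn : k ≤ n) :
    τ ≤ (k : ℝ) / ((n : ℝ) + 1) ∧
    (k : ℝ) / ((n : ℝ) + 1) ≤
      (P {ω | S (Fin.last n) ω ≤
        orderStat k (fun i : Fin n => S i.castSucc ω)}).toReal :=
  split_conformal_coverage_general P n S hmeas hexch hdist τ k hk hkn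
end

section
/- Let F : ℝ → ℝ be differentiable on [ρ − δ, ρ + δ] with derivative bounded below by κ > 0 there, F(ρ) = τ, and let F̂ : ℝ → ℝ be nondecreasing with sup_{r ∈ [ρ−δ, ρ+δ]} |F̂(r) − F(r)| ≤ κη/2 for some 0 < η ≤ δ. Then any ρ̂ satisfying F̂(r) < τ for r < ρ̂ and F̂(ρ̂) ≥ τ (i.e., ρ̂ = inf{r : F̂(r) ≥ τ}) satisfies |ρ̂ − ρ| ≤ η. -/
/-! On `[ρ - δ, ρ + δ]` the function `F - κ · id` is monotone, so `F (ρ + η) ≥ τ + κη` and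
`F (ρ - η) ≤ τ - κη`. An approximation within `κη/2` keeps `F̂ (ρ + η) ≥ τ` and `F̂ (ρ - η) < τ`,
and since `ρ̂` is the least point where the monotone `F̂` reaches `τ`, it lies in
`[ρ - η, ρ + η]`. -/

open Set

theorem Convex.mul_sub_le_image_sub_of_hasDerivWithinAt {D : Set ℝ} (hD : Convex ℝ D)
    {f f' : ℝ → ℝ} {C : ℝ} (hf : ∀ x ∈ D, HasDerivWithinAt f (f' x) D x)
    (hC : ∀ x ∈ D, C ≤ f' x) ⦃x y : ℝ⦄ (hx : x ∈ D) (hy : y ∈ D) (hxy : x ≤ y) :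
    C * (y - x) ≤ f y - f x := by
  have hmono : MonotoneOn (fun z => f z - C * z) D := by
    refine monotoneOn_of_hasDerivWithinAt_nonneg (f' := fun z => f' z - C) hD
      (fun z hz => ((hf z hz).continuousWithinAt).sub (continuousWithinAt_id.const_mul C))
      (fun z hz => ?_) (fun z hz => sub_nonneg.2 (hC z (interior_subset hz)))
    simpa only [mul_one, id_eq] using ((hf z (interior_subset hz)).mono interior_subset).fun_sub
      ((hasDerivWithinAt_id z (interior D)).const_mul C)
  linarith [hmono hx hy hxy]

theorem Monotone.lt_of_apply_lt_of_isLeast {α β : Type*} [LinearOrder α] [Preorder β]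
    {g : α → β} (hg : Monotone g) {τ : β} {a x : α} (hx : IsLeast {r | τ ≤ g r} x)
    (ha : g a < τ) : a < x :=
  lt_of_not_ge fun hxa => (hx.1.trans (hg hxa)).not_gt ha

theorem quantile_stability_general (ρ δ κ η τ : ℝ)
    (hκ : 0 < κ) (hη : 0 < η) (hηδ : η ≤ δ)
    (F Fhat : ℝ → ℝ) (f' : ℝ → ℝ)
    (hdiff : ∀ r ∈ Set.Icc (ρ - δ) (ρ + δ),
      HasDerivWithinAt F (f' r) (Set.Icc (ρ - δ) (ρ + δ)) r)
    (hlb : ∀ r ∈ Set.Icc (ρ - δ) (ρ + δ), κ ≤ f' r)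
    (hFρ : F ρ = τ)
    (hmono : Monotone Fhat)
    (happrox : ∀ r ∈ Set.Icc (ρ - δ) (ρ + δ), |Fhat r - F r| ≤ κ * η / 2)
    (ρhat : ℝ) (hρhat1 : ∀ r, r < ρhat → Fhat r < τ) (hρhat2 : τ ≤ Fhat ρhat) :
    |ρhat - ρ| ≤ η := by
  have hquantile : IsLeast {r | τ ≤ Fhat r} ρhat :=
    ⟨hρhat2, fun r hr => not_lt.1 fun hlt => (hρhat1 r hlt).not_ge hr⟩
  have hρ : ρ ∈ Icc (ρ - δ) (ρ + δ) := ⟨by linarith, by linarith⟩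
  have hρ_add : ρ + η ∈ Icc (ρ - δ) (ρ + δ) := ⟨by linarith, by linarith⟩
  have hρ_sub : ρ - η ∈ Icc (ρ - δ) (ρ + δ) := ⟨by linarith, by linarith⟩
  have hgrowth := (convex_Icc (ρ - δ) (ρ + δ)).mul_sub_le_image_sub_of_hasDerivWithinAt hdiff hlb
  have hF_add : τ + κ * η ≤ F (ρ + η) := by linarith [hgrowth hρ hρ_add (by linarith)]
  have hF_sub : F (ρ - η) ≤ τ - κ * η := by linarith [hgrowth hρ_sub hρ (by linarith)]
  have happrox_add := abs_le.1 (happrox _ hρ_add)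
  have happrox_sub := abs_le.1 (happrox _ hρ_sub)
  have hκη : 0 < κ * η := mul_pos hκ hη
  have hupper : ρhat ≤ ρ + η := hquantile.2 (show τ ≤ Fhat (ρ + η) by linarith)
  have hlower : ρ - η < ρhat := hmono.lt_of_apply_lt_of_isLeast hquantile (by linarith)
  exact abs_sub_le_iff.2 ⟨by linarith, by linarith⟩

/-- Quantile-stability lemma: if `F` is differentiable on `[ρ−δ, ρ+δ]` with
derivative bounded below by `κ > 0`, `F(ρ) = τ`, and the nondecreasing `F̂`
uniformly approximates `F` within `κη/2` there (`0 < η ≤ δ`), then the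
generalized `τ`-quantile `ρ̂` of `F̂` satisfies `|ρ̂ − ρ| ≤ η`. -/
theorem quantile_stability (ρ δ κ η τ : ℝ)
    (hδ : 0 < δ) (hκ : 0 < κ) (hη : 0 < η) (hηδ : η ≤ δ)
    (F Fhat : ℝ → ℝ) (f' : ℝ → ℝ)
    (hdiff : ∀ r ∈ Set.Icc (ρ - δ) (ρ + δ),
      HasDerivWithinAt F (f' r) (Set.Icc (ρ - δ) (ρ + δ)) r)
    (hlb : ∀ r ∈ Set.Icc (ρ - δ) (ρ + δ), κ ≤ f' r)
    (hFρ : F ρ = τ)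
    (hmono : Monotone Fhat)
    (happrox : ∀ r ∈ Set.Icc (ρ - δ) (ρ + δ), |Fhat r - F r| ≤ κ * η / 2)
    (ρhat : ℝ) (hρhat1 : ∀ r, r < ρhat → Fhat r < τ) (hρhat2 : τ ≤ Fhat ρhat) :
    |ρhat - ρ| ≤ η :=
  quantile_stability_general ρ δ κ η τ hκ hη hηδ F Fhat f' hdiff hlb hFρ hmono happrox ρhat hρhat1
    hρhat2
end
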